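/- Let A = (a_1,...,a_n) with n > 4, α = Σ a_i even, and suppose every subset with element-sum in {α/2−1, α/2−2} has cardinality exactly k = (n+2)/3 (with 3 ∣ n+2). Let G = (a_1,...,a_n,1,1; α/2), S = {n+1,n+2}, and G_{&S} = (2, a_1,...,a_n; α/2). Then ShapleyShubik(G_{&S},1) > ShapleyShubik(G,n+1) + ShapleyShubik(G,n+2) if and only if the number of subsets of {1,...,n} with element-sum α/2 − 2 exceeds the number of subsets with element-sum α/2 − 1. -/

import Mathlib

/-!
A coalition of the other players is a swing for the merged player (weight 2) iff its weight is
`q - 1` or `q - 2`, and a swing for a unit-weight player iff its weight is `q - 1`: either it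
avoids the other unit player and its `a`-part weighs `q - 1`, or it contains it and its `a`-part
weighs `q - 2`. By the cardinality hypothesis all these `a`-parts have `k` elements, so each index
is a subset-sum count times a single factorial weight. With `n + 2 = 3k` the comparison reduces to
`(k - 2) · (N(q - 2) - N(q - 1)) > 0`, and `n > 4` gives `k > 2`.
-/

open Finset

/-- The value (1 or 0) of coalition `C` in the weighted voting game with
weights `w` and quota `q`: `C` wins iff its total weight is at least `q`. -/
def wvgVal {ι : Type*} [DecidableEq ι] (w : ι → ℕ) (q : ℕ) (C : Finset ι) : ℚ :=
  if q ≤ ∑ j ∈ C, w j then 1 else 0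

/-- Shapley–Shubik index of player `i` in the weighted voting game
with weights `w` and quota `q`. -/
def shapley {ι : Type*} [Fintype ι] [DecidableEq ι] (w : ι → ℕ) (q : ℕ) (i : ι) : ℚ :=
  (1 / (Nat.factorial (Fintype.card ι))) *
    ∑ C ∈ (Finset.univ.erase i).powerset,
      (Nat.factorial C.card : ℚ) * (Nat.factorial (Fintype.card ι - 1 - C.card) : ℚ) *
        (wvgVal w q (insert i C) - wvgVal w q C)

/-- The number of subsets of indices of the sequence `c : Fin n → ℕ` whose
corresponding elements sum to `t` (the `#SubsetSum` count). -/
def countSubsetSum (n : ℕ) (c : Fin n → ℕ) (t : ℕ) : ℕ :=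
  ((Finset.univ : Finset (Fin n)).powerset.filter (fun S => ∑ i ∈ S, c i = t)).card

open scoped Nat

theorem Finset.powerset_map {α β : Type*} (e : α ↪ β) (s : Finset α) :
    (s.map e).powerset = s.powerset.map (mapEmbedding e).toEmbedding := by
  ext t
  simp [subset_map_iff, eq_comm]

theorem Fin.last_notMem_map_castSuccEmb {m : ℕ} (s : Finset (Fin m)) :
    last m ∉ s.map castSuccEmb := by
  simp [castSucc_ne_last]

theorem Fin.sum_powerset_univ_castSucc {M : Type*} [AddCommMonoid M] (m : ℕ)
    (f : Finset (Fin (m + 1)) → M) :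
    ∑ t ∈ (univ : Finset (Fin (m + 1))).powerset, f t =
      ∑ t ∈ (univ : Finset (Fin m)).powerset, f (t.map castSuccEmb) +
        ∑ t ∈ (univ : Finset (Fin m)).powerset, f (insert (last m) (t.map castSuccEmb)) := by
  have huniv : (univ : Finset (Fin (m + 1))) = insert (last m) (univ.map castSuccEmb) := by
    ext x; induction x using Fin.lastCases <;> simp
  rw [huniv, sum_powerset_insert (last_notMem_map_castSuccEmb _), powerset_map, sum_map, sum_map]
  rfl

section WeightedVotingGame

variable {ι : Type*} [DecidableEq ι]

theorem wvgVal_comp_perm (w : ι → ℕ) (q : ℕ) (σ : Equiv.Perm ι) (C : Finset ι) :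
    wvgVal (w ∘ σ) q C = wvgVal w q (C.map σ.toEmbedding) := by
  simp [wvgVal, sum_map]

theorem wvgVal_insert_sub_wvgVal (w : ι → ℕ) (q : ℕ) {i : ι} {C : Finset ι} (hi : i ∉ C) :
    wvgVal w q (insert i C) - wvgVal w q C =
      if ∑ j ∈ C, w j < q ∧ q ≤ w i + ∑ j ∈ C, w j then 1 else 0 := by
  simp only [wvgVal, sum_insert hi]
  split_ifs <;> norm_num <;> omega

variable [Fintype ι]

theorem shapley_comp_perm (w : ι → ℕ) (q : ℕ) (σ : Equiv.Perm ι) (i : ι) :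
    shapley (w ∘ σ) q i = shapley w q (σ i) := by
  unfold shapley
  congr 1
  refine sum_equiv σ.finsetCongr (fun C => ?_) (fun C _ => ?_)
  · simp [subset_erase]
  · simp [wvgVal_comp_perm, Equiv.finsetCongr_apply, map_insert]

theorem shapley_eq_of_weight_eq (w : ι → ℕ) (q : ℕ) {i j : ι} (h : w i = w j) :
    shapley w q i = shapley w q j := by
  have hw : w ∘ Equiv.swap i j = w := by
    ext x
    simp only [Function.comp_apply, Equiv.swap_apply_def]
    split_ifs <;> simp_all
  calc shapley w q i = shapley (w ∘ Equiv.swap i j) q i := by rw [hw]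
    _ = shapley w q j := by rw [shapley_comp_perm, Equiv.swap_apply_left]

theorem shapley_eq_sum_powerset_of_map_eq_erase {κ : Type*} [Fintype κ] (w : ι → ℕ) (q : ℕ)
    {i : ι} (e : κ ↪ ι) (he : univ.map e = univ.erase i) :
    shapley w q i = 1 / (Fintype.card ι)! * ∑ B ∈ (univ : Finset κ).powerset,
      if ∑ x ∈ B, w (e x) < q ∧ q ≤ w i + ∑ x ∈ B, w (e x) then
        (B.card ! * (Fintype.card ι - 1 - B.card)! : ℚ) else 0 := by
  rw [shapley, ← he, powerset_map, sum_map]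
  congr 1
  refine sum_congr rfl fun B _ => ?_
  have hi : i ∉ B.map e := fun h => by
    obtain ⟨x, -, rfl⟩ := mem_map.1 h
    simpa [he] using mem_map_of_mem e (mem_univ x)
  rw [RelEmbedding.coe_toEmbedding, mapEmbedding_apply, wvgVal_insert_sub_wvgVal _ _ hi,
    sum_map, card_map, mul_ite, mul_one, mul_zero]

end WeightedVotingGame

theorem shapley_cons_zero (m x : ℕ) (a : Fin m → ℕ) (q : ℕ) :
    shapley (Fin.cons x a : Fin (m + 1) → ℕ) q 0 =
      1 / (m + 1)! * ∑ B ∈ (univ : Finset (Fin m)).powerset,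
        if ∑ i ∈ B, a i < q ∧ q ≤ x + ∑ i ∈ B, a i then (B.card ! * (m - B.card)! : ℚ) else 0 := by
  rw [shapley_eq_sum_powerset_of_map_eq_erase _ _ (Fin.succEmb m)]
  · simp
  · ext y; induction y using Fin.cases <;> simp [Fin.succ_ne_zero]

theorem shapley_snoc_last (m x : ℕ) (a : Fin m → ℕ) (q : ℕ) :
    shapley (Fin.snoc a x : Fin (m + 1) → ℕ) q (Fin.last m) =
      1 / (m + 1)! * ∑ B ∈ (univ : Finset (Fin m)).powerset,
        if ∑ i ∈ B, a i < q ∧ q ≤ x + ∑ i ∈ B, a i then (B.card ! * (m - B.card)! : ℚ) else 0 := by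
  rw [shapley_eq_sum_powerset_of_map_eq_erase _ _ Fin.castSuccEmb]
  · simp
  · ext y; induction y using Fin.lastCases <;> simp [Fin.castSucc_ne_last]

theorem sum_ite_subsetSum_eq_countSubsetSum_mul (m : ℕ) (a : Fin m → ℕ) (t k : ℕ) (f : ℕ → ℚ)
    (hk : ∀ S : Finset (Fin m), ∑ i ∈ S, a i = t → S.card = k) :
    ∑ S ∈ (univ : Finset (Fin m)).powerset, (if ∑ i ∈ S, a i = t then f S.card else 0) =
      countSubsetSum m a t * f k := by
  rw [← sum_filter, sum_congr rfl fun S hS => by rw [hk S (mem_filter.1 hS).2], sum_const,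
    nsmul_eq_mul]
  rfl

theorem shapley_cons_two_zero (m : ℕ) (a : Fin m → ℕ) (q k : ℕ) (hq : 2 ≤ q)
    (hk : ∀ S : Finset (Fin m), (∑ i ∈ S, a i = q - 1 ∨ ∑ i ∈ S, a i = q - 2) → S.card = k) :
    shapley (Fin.cons 2 a : Fin (m + 1) → ℕ) q 0 =
      (countSubsetSum m a (q - 1) + countSubsetSum m a (q - 2)) * (k ! * (m - k)!) / (m + 1)! := by
  have hsplit : ∀ B : Finset (Fin m),
      (if ∑ i ∈ B, a i < q ∧ q ≤ 2 + ∑ i ∈ B, a i then (B.card ! * (m - B.card)! : ℚ) else 0) =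
        (if ∑ i ∈ B, a i = q - 1 then (B.card ! * (m - B.card)! : ℚ) else 0) +
          (if ∑ i ∈ B, a i = q - 2 then (B.card ! * (m - B.card)! : ℚ) else 0) := by
    intro B
    split_ifs <;> first | (exfalso; omega) | simp
  rw [shapley_cons_zero, sum_congr rfl fun B _ => hsplit B, sum_add_distrib,
    sum_ite_subsetSum_eq_countSubsetSum_mul m a _ k (fun c => (c ! * (m - c)! : ℚ))
      fun S hS => hk S (.inl hS),
    sum_ite_subsetSum_eq_countSubsetSum_mul m a _ k (fun c => (c ! * (m - c)! : ℚ))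
      fun S hS => hk S (.inr hS)]
  ring

theorem shapley_snoc_snoc_one_last (m : ℕ) (a : Fin m → ℕ) (q k : ℕ) (hq : 2 ≤ q)
    (hk : ∀ S : Finset (Fin m), (∑ i ∈ S, a i = q - 1 ∨ ∑ i ∈ S, a i = q - 2) → S.card = k) :
    shapley (Fin.snoc (Fin.snoc a 1) 1 : Fin (m + 2) → ℕ) q (Fin.last (m + 1)) =
      (countSubsetSum m a (q - 1) * (k ! * (m + 1 - k)!) +
        countSubsetSum m a (q - 2) * ((k + 1)! * (m - k)!)) / (m + 2)! := by
  have hswing₁ : ∀ s : ℕ, (s < q ∧ q ≤ 1 + s) ↔ s = q - 1 := by omega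
  have hswing₂ : ∀ s : ℕ, 1 + s = q - 1 ↔ s = q - 2 := by omega
  rw [shapley_snoc_last, Fin.sum_powerset_univ_castSucc]
  simp only [sum_map, sum_insert (Fin.last_notMem_map_castSuccEmb _), card_map,
    card_insert_of_notMem (Fin.last_notMem_map_castSuccEmb _), Fin.coe_castSuccEmb,
    Fin.snoc_castSucc, Fin.snoc_last, hswing₁, hswing₂, Nat.add_sub_add_right]
  rw [sum_ite_subsetSum_eq_countSubsetSum_mul m a _ k (fun c => (c ! * (m + 1 - c)! : ℚ))
      fun S hS => hk S (.inl hS),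
    sum_ite_subsetSum_eq_countSubsetSum_mul m a _ k (fun c => ((c + 1)! * (m - c)! : ℚ))
      fun S hS => hk S (.inr hS)]
  ring

theorem merge_gain_iff (n k N₁ N₂ : ℕ) (hnk : n + 2 = 3 * k) (hk : 2 < k) :
    (N₁ + N₂ : ℚ) * (k ! * (n - k)!) / (n + 1)! >
        (N₁ * (k ! * (n + 1 - k)!) + N₂ * ((k + 1)! * (n - k)!) : ℚ) / (n + 2)! +
          (N₁ * (k ! * (n + 1 - k)!) + N₂ * ((k + 1)! * (n - k)!) : ℚ) / (n + 2)! ↔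
      N₂ > N₁ := by
  have hkn : k ≤ n := by omega
  have hnkq : (n : ℚ) + 2 = 3 * k := by exact_mod_cast hnk
  set c : ℚ := k ! * (n - k)! / (n + 2)! with hc_def
  have hc : 0 < c := by positivity
  have hmerged : (N₁ + N₂ : ℚ) * (k ! * (n - k)!) / (n + 1)! = c * (3 * k * (N₁ + N₂)) := by
    rw [hc_def, Nat.factorial_succ (n + 1)]
    push_cast
    field_simp
    linear_combination (N₁ + N₂ : ℚ) * hnkq
  have hsingle : (N₁ * (k ! * (n + 1 - k)!) + N₂ * ((k + 1)! * (n - k)!) : ℚ) / (n + 2)! =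
      c * ((2 * k - 1) * N₁ + (k + 1) * N₂) := by
    rw [hc_def, show n + 1 - k = n - k + 1 by omega, Nat.factorial_succ (n - k),
      Nat.factorial_succ k]
    push_cast [Nat.cast_sub hkn]
    field_simp
    linear_combination (N₁ : ℚ) * hnkq
  have hdiff : 3 * k * (N₁ + N₂) - ((2 * k - 1) * N₁ + (k + 1) * N₂ +
      ((2 * k - 1) * N₁ + (k + 1) * N₂)) = (k - 2 : ℚ) * (N₂ - N₁) := by
    ring
  have hk2 : (0 : ℚ) < k - 2 := by
    rw [sub_pos]
    exact_mod_cast hk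
  rw [hmerged, hsingle, ← mul_add, gt_iff_lt, gt_iff_lt, mul_lt_mul_iff_right₀ hc, ← sub_pos,
    hdiff, mul_pos_iff_of_pos_left hk2, sub_pos, Nat.cast_lt]

theorem shapley_beneficial_merge_iff (n : ℕ) (a : Fin n → ℕ)
    (hn : 4 < n) (α : ℕ)
    (hdvd : 3 ∣ n + 2)
    (hk : ∀ S : Finset (Fin n),
      (∑ i ∈ S, a i = α / 2 - 1 ∨ ∑ i ∈ S, a i = α / 2 - 2) →
        S.card = (n + 2) / 3) :
    shapley (Fin.cons 2 a : Fin (n + 1) → ℕ) (α / 2) (0 : Fin (n + 1)) >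
        shapley (Fin.snoc (Fin.snoc a 1) 1 : Fin (n + 2) → ℕ) (α / 2)
            (⟨n, by omega⟩ : Fin (n + 2)) +
          shapley (Fin.snoc (Fin.snoc a 1) 1 : Fin (n + 2) → ℕ) (α / 2)
            (⟨n + 1, by omega⟩ : Fin (n + 2)) ↔
      countSubsetSum n a (α / 2 - 2) > countSubsetSum n a (α / 2 - 1) := by
  have hnk : n + 2 = 3 * ((n + 2) / 3) := (Nat.mul_div_cancel' hdvd).symm
  -- otherwise `α / 2 - 2 = 0` is the sum over the empty coalition
  have hq : 2 ≤ α / 2 := by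
    by_contra hq
    have := hk ∅ (.inr (by simp; omega))
    simp at this
    omega
  have hweight : (Fin.snoc (Fin.snoc a 1) 1 : Fin (n + 2) → ℕ) (Fin.last n).castSucc =
      (Fin.snoc (Fin.snoc a 1) 1 : Fin (n + 2) → ℕ) (Fin.last (n + 1)) := by
    simp
  rw [show (⟨n, _⟩ : Fin (n + 2)) = (Fin.last n).castSucc from rfl,
    show (⟨n + 1, _⟩ : Fin (n + 2)) = Fin.last (n + 1) from rfl,
    shapley_eq_of_weight_eq _ _ hweight, shapley_cons_two_zero n a _ _ hq hk,
    shapley_snoc_snoc_one_last n a _ _ hq hk]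
  exact merge_gain_iff n _ _ _ hnk (by omega)
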